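/- arXiv:1508.03789 — 2 statements merged into one kernel-verified Lean document; each statement's English description precedes it below -/
import Mathlib

section
/- Let R, R_c ∈ SO(3) and suppose Ψ(R,R_c) = (1/2) tr(I − R_cᵀR) < 1. Then e₃ᵀ R_cᵀ R e₃ ≥ 1 − Ψ(R,R_c) > 0, where e₃ = (0,0,1). -/
open Matrix

noncomputable section

/-- The hat map `ℝ³ → 𝔰𝔬(3)`, with `hat x *ᵥ y = x × y`. -/
def hat (x : Fin 3 → ℝ) : Matrix (Fin 3) (Fin 3) ℝ :=
  !![0, -x 2, x 1; x 2, 0, -x 0; -x 1, x 0, 0]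

/-- The vee map, inverse of the hat map on skew-symmetric matrices. -/
def vee (A : Matrix (Fin 3) (Fin 3) ℝ) : Fin 3 → ℝ :=
  ![A 2 1, A 0 2, A 1 0]

/-- Membership in the special orthogonal group SO(3). -/
def SO3 (R : Matrix (Fin 3) (Fin 3) ℝ) : Prop :=
  Rᵀ * R = 1 ∧ R.det = 1

/-- Euclidean norm on `ℝ³` (and `ℝ²`). -/
def norm3 (x : Fin 3 → ℝ) : ℝ := Real.sqrt (x ⬝ᵥ x)

def norm2v (x : Fin 2 → ℝ) : ℝ := Real.sqrt (x ⬝ᵥ x)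

/-- Attitude error function `Ψ(R,R_d) = (1/2) tr (G (I - R_dᵀ R))`. -/
def Psi (G R Rd : Matrix (Fin 3) (Fin 3) ℝ) : ℝ :=
  (1 / 2) * (G * (1 - Rdᵀ * R)).trace

/-- Attitude error vector `e_R = (1/2) (G R_dᵀ R - Rᵀ R_d G)^∨`. -/
def eR (G R Rd : Matrix (Fin 3) (Fin 3) ℝ) : Fin 3 → ℝ :=
  (1 / 2 : ℝ) • vee (G * Rdᵀ * R - Rᵀ * Rd * G)

/-- Third standard basis vector of `ℝ³`. -/
def e3 : Fin 3 → ℝ := ![0, 0, 1]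

/-!
With `Q = R_cᵀ R ∈ SO(3)`, `1 - Ψ = (tr Q - 1)/2` and `e₃ᵀ Q e₃ = Q₂₂`, so it suffices that
`u = 1 + Q₂₂ - Q₀₀ - Q₁₁ ≥ 0` for every rotation `Q` (for `Q` given by a unit quaternion `q`,
`u = 4 q₃²`). Orthogonality together with "cofactor = entry" (`adj Q = Qᵀ` as `det Q = 1`) gives
`u (4 - u)` as a sum of three squares, which forces `u ≥ 0`.
-/

namespace SO3

variable {A B Q : Matrix (Fin 3) (Fin 3) ℝ}

theorem mul_transpose (hQ : SO3 Q) : Q * Qᵀ = 1 :=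
  mul_eq_one_comm.mp hQ.1

theorem transpose_mul (hA : SO3 A) (hB : SO3 B) : SO3 (Aᵀ * B) := by
  refine ⟨?_, by rw [det_mul, det_transpose, hA.2, hB.2, one_mul]⟩
  rw [Matrix.transpose_mul, transpose_transpose, Matrix.mul_assoc, ← Matrix.mul_assoc A,
    hA.mul_transpose, Matrix.one_mul, hB.1]

theorem adjugate_eq_transpose (hQ : SO3 Q) : Q.adjugate = Qᵀ := by
  calc Q.adjugate = Qᵀ * Q * Q.adjugate := by rw [hQ.1, Matrix.one_mul]
    _ = Qᵀ := by rw [Matrix.mul_assoc, mul_adjugate, hQ.2, one_smul, Matrix.mul_one]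

theorem row_sq_sum (hQ : SO3 Q) (i : Fin 3) : Q i 0 ^ 2 + Q i 1 ^ 2 + Q i 2 ^ 2 = 1 := by
  have := congr_fun (congr_fun hQ.mul_transpose i) i
  simpa [mul_apply, Fin.sum_univ_three, sq] using this

theorem col_sq_sum (hQ : SO3 Q) (j : Fin 3) : Q 0 j ^ 2 + Q 1 j ^ 2 + Q 2 j ^ 2 = 1 := by
  have := congr_fun (congr_fun hQ.1 j) j
  simpa [mul_apply, Fin.sum_univ_three, sq] using this

theorem diag_eq_minor (hQ : SO3 Q) :
    Q 0 0 = Q 1 1 * Q 2 2 - Q 1 2 * Q 2 1 ∧ Q 1 1 = Q 0 0 * Q 2 2 - Q 0 2 * Q 2 0 ∧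
      Q 2 2 = Q 0 0 * Q 1 1 - Q 0 1 * Q 1 0 := by
  have h (i : Fin 3) := congr_fun₂ hQ.adjugate_eq_transpose i i
  have h0 := h 0
  have h1 := h 1
  have h2 := h 2
  simp only [adjugate_fin_three, of_apply, cons_val', cons_val_zero, cons_val_one, cons_val,
    cons_val_fin_one, transpose_apply] at h0 h1 h2
  exact ⟨by linarith, by linarith, by linarith⟩

theorem trace_sub_one_le_two_mul (hQ : SO3 Q) : Q.trace - 1 ≤ 2 * Q 2 2 := by
  obtain ⟨h0, h1, h2⟩ := hQ.diag_eq_minor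
  -- the three summands are `u u₀ = (Q₁₀ - Q₀₁)²`, etc., with `u₀ = 1 + tr Q`
  have key : (1 + Q 2 2 - Q 0 0 - Q 1 1) * (3 - Q 2 2 + Q 0 0 + Q 1 1) =
      (Q 1 0 - Q 0 1) ^ 2 + (Q 0 2 + Q 2 0) ^ 2 + (Q 1 2 + Q 2 1) ^ 2 := by
    linear_combination 2 * h2 - 2 * h1 - 2 * h0
      - 2 * (hQ.row_sq_sum 0 + hQ.row_sq_sum 1 + hQ.row_sq_sum 2) + hQ.col_sq_sum 0
      + hQ.col_sq_sum 1 + hQ.col_sq_sum 2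
  rw [trace_fin_three]
  nlinarith [sq_nonneg (Q 1 0 - Q 0 1), sq_nonneg (Q 0 2 + Q 2 0), sq_nonneg (Q 1 2 + Q 2 1)]

end SO3

theorem Psi_one_eq (R Rd : Matrix (Fin 3) (Fin 3) ℝ) :
    Psi 1 R Rd = (3 - (Rdᵀ * R).trace) / 2 := by
  rw [Psi, Matrix.one_mul, trace_sub, trace_one, Fintype.card_fin]
  ring

theorem e3_dotProduct_mulVec_e3 (Q : Matrix (Fin 3) (Fin 3) ℝ) : e3 ⬝ᵥ (Q *ᵥ e3) = Q 2 2 := by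
  simp [e3, mulVec, dotProduct, Fin.sum_univ_three]

/-- `e₃ᵀ R_cᵀ R e₃ ≥ 1 − Ψ(R,R_c) > 0` whenever `Ψ(R,R_c) < 1`. -/
theorem e3_angle_bound (R Rc : Matrix (Fin 3) (Fin 3) ℝ)
    (hR : SO3 R) (hRc : SO3 Rc) (hΨ : Psi 1 R Rc < 1) :
    1 - Psi 1 R Rc ≤ e3 ⬝ᵥ ((Rcᵀ * R) *ᵥ e3) ∧ 0 < 1 - Psi 1 R Rc := by
  have hQ := (hRc.transpose_mul hR).trace_sub_one_le_two_mul
  rw [Psi_one_eq] at hΨ ⊢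
  rw [e3_dotProduct_mulVec_e3]
  constructor <;> linarith
end
end

section
/- (Attitude error dynamics) Consider the rigid body equations Ṙ = RΩ̂, JΩ̇ + Ω × JΩ = M, a desired trajectory with Ṙ_d = R_dΩ̂_d, errors e_Ω = Ω − RᵀR_dΩ_d, and moment input M = −k_R e_R − k_Ω e_Ω + (RᵀR_dΩ_d)^∧ J RᵀR_dΩ_d + J RᵀR_d Ω̇_d. Then J ė_Ω = (J e_Ω + d)^∧ e_Ω − k_R e_R − k_Ω e_Ω, where d = (2J − tr(J)I) RᵀR_d Ω_d. -/
open Matrix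

noncomputable section

attribute [local instance] Matrix.normedAddCommGroup Matrix.normedSpace

/-! Differentiating `e_Ω = Ω - v`, `v = RᵀR_dΩ_d`, with `Ṙ = RΩ̂` and `Ṙ_d = R_dΩ̂_d` gives
`v̇ = -Ω × v + RᵀR_dΩ̇_d`, since `Ω̂_dΩ_d = Ω_d × Ω_d = 0`. After substituting the equations of
motion and the moment `M`, the claim reduces to the cross-product identity
`(J e_Ω + d) × e_Ω = v × Jv - Ω × JΩ + J (Ω × v)`, a rearrangement of
`x × Jy + J (x × y) = ((tr J • 1 - J) x) × y`, which holds because `J` is symmetric. -/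

section MatrixCalculus

variable {l m n : Type*} {t : ℝ}

theorem HasDerivAt.matrix_apply [Fintype n] {A : ℝ → Matrix m n ℝ} {A' : Matrix m n ℝ}
    (hA : HasDerivAt A A' t) (i : m) (j : n) : HasDerivAt (fun s => A s i j) (A' i j) t := by
  have hrow : HasDerivAt (fun s => A s i) (A' i) t := hasDerivAt_pi.mp hA i
  exact hasDerivAt_pi.mp hrow j

theorem HasDerivAt.matrix_transpose [Fintype m] [Fintype n] {A : ℝ → Matrix m n ℝ}
    {A' : Matrix m n ℝ} (hA : HasDerivAt A A' t) : HasDerivAt (fun s => (A s)ᵀ) A'ᵀ t :=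
  hasDerivAt_pi.mpr fun j => hasDerivAt_pi.mpr fun i => hA.matrix_apply i j

theorem HasDerivAt.matrix_mul [Fintype m] [Fintype n] {A : ℝ → Matrix l m ℝ}
    {B : ℝ → Matrix m n ℝ} {A' : Matrix l m ℝ} {B' : Matrix m n ℝ}
    (hA : HasDerivAt A A' t) (hB : HasDerivAt B B' t) :
    HasDerivAt (fun s => A s * B s) (A' * B t + A t * B') t := by
  refine hasDerivAt_pi.mpr fun i => hasDerivAt_pi.mpr fun j => ?_
  simp only [Matrix.add_apply, Matrix.mul_apply, ← Finset.sum_add_distrib]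
  exact HasDerivAt.fun_sum fun k _ => (hA.matrix_apply i k).mul (hB.matrix_apply k j)

theorem HasDerivAt.matrix_mulVec [Fintype m] {A : ℝ → Matrix l m ℝ} {v : ℝ → m → ℝ}
    {A' : Matrix l m ℝ} {v' : m → ℝ} (hA : HasDerivAt A A' t) (hv : HasDerivAt v v' t) :
    HasDerivAt (fun s => A s *ᵥ v s) (A' *ᵥ v t + A t *ᵥ v') t := by
  refine hasDerivAt_pi.mpr fun i => ?_
  simp only [Pi.add_apply, Matrix.mulVec, dotProduct, ← Finset.sum_add_distrib]
  exact HasDerivAt.fun_sum fun k _ => (hA.matrix_apply i k).mul (hasDerivAt_pi.mp hv k)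

end MatrixCalculus

theorem hat_mulVec (x y : Fin 3 → ℝ) : hat x *ᵥ y = x ⨯₃ y := by
  ext i
  fin_cases i <;> simp [hat, cross_apply, Matrix.mulVec, dotProduct, Fin.sum_univ_three] <;> ring

theorem hat_transpose (x : Fin 3 → ℝ) : (hat x)ᵀ = -hat x := by
  ext i j
  fin_cases i <;> fin_cases j <;> simp [hat]

theorem Matrix.IsSymm.cross_mulVec_add_mulVec_cross {J : Matrix (Fin 3) (Fin 3) ℝ}
    (hJ : J.IsSymm) (x y : Fin 3 → ℝ) :
    x ⨯₃ (J *ᵥ y) + J *ᵥ (x ⨯₃ y) = ((J.trace • 1 - J) *ᵥ x) ⨯₃ y := by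
  have h10 := hJ.apply 1 0
  have h20 := hJ.apply 2 0
  have h21 := hJ.apply 2 1
  ext i
  fin_cases i <;>
    simp [cross_apply, Matrix.mulVec, dotProduct, Fin.sum_univ_three, Matrix.trace,
      Matrix.sub_apply, Matrix.one_apply] <;>
    rw [h10, h20, h21] <;> ring

theorem Matrix.IsSymm.hat_mulVec_sub_eq {J : Matrix (Fin 3) (Fin 3) ℝ} (hJ : J.IsSymm)
    (Ω v : Fin 3 → ℝ) :
    hat (J *ᵥ (Ω - v) + ((2 : ℝ) • J - J.trace • 1) *ᵥ v) *ᵥ (Ω - v)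
      = v ⨯₃ (J *ᵥ v) - Ω ⨯₃ (J *ᵥ Ω) + J *ᵥ (Ω ⨯₃ v) := by
  have key := hJ.cross_mulVec_add_mulVec_cross v Ω
  rw [← cross_anticomm (J *ᵥ Ω) v, ← cross_anticomm Ω v, Matrix.mulVec_neg] at key
  rw [hat_mulVec, ← cross_anticomm (J *ᵥ Ω) Ω, ← cross_anticomm (J *ᵥ v) v]
  simp only [Matrix.sub_mulVec, Matrix.smul_mulVec, Matrix.one_mulVec, Matrix.mulVec_sub, map_add,
    map_sub, map_smul, LinearMap.add_apply, LinearMap.sub_apply, LinearMap.smul_apply, cross_self]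
    at key ⊢
  linear_combination (norm := module) key

theorem hasDerivAt_transpose_mul_mulVec {R Rd : ℝ → Matrix (Fin 3) (Fin 3) ℝ}
    {Ω Ωd : ℝ → Fin 3 → ℝ} {Ωd' : Fin 3 → ℝ} {t : ℝ}
    (hR : HasDerivAt R (R t * hat (Ω t)) t) (hRd : HasDerivAt Rd (Rd t * hat (Ωd t)) t)
    (hΩd : HasDerivAt Ωd Ωd' t) :
    HasDerivAt (fun s => ((R s)ᵀ * Rd s) *ᵥ Ωd s)
      (-(Ω t ⨯₃ (((R t)ᵀ * Rd t) *ᵥ Ωd t)) + ((R t)ᵀ * Rd t) *ᵥ Ωd') t := by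
  have hskew : (R t * hat (Ω t))ᵀ * Rd t = -(hat (Ω t) * ((R t)ᵀ * Rd t)) := by
    rw [Matrix.transpose_mul, hat_transpose, Matrix.neg_mul, Matrix.neg_mul, Matrix.mul_assoc]
  have hfixed : ((R t)ᵀ * (Rd t * hat (Ωd t))) *ᵥ Ωd t = 0 := by
    rw [← Matrix.mulVec_mulVec, ← Matrix.mulVec_mulVec, hat_mulVec, cross_self,
      Matrix.mulVec_zero, Matrix.mulVec_zero]
  convert (hR.matrix_transpose.matrix_mul hRd).matrix_mulVec hΩd using 1
  rw [Matrix.add_mulVec, hskew, hfixed, add_zero, Matrix.neg_mulVec,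
    ← Matrix.mulVec_mulVec _ (hat _), hat_mulVec]

theorem attitude_error_dynamics_general
    (J : Matrix (Fin 3) (Fin 3) ℝ) (hJ : J.PosDef)
    (kR kΩ : ℝ)
    (R Rd : ℝ → Matrix (Fin 3) (Fin 3) ℝ) (Ω Ω' Ωd Ωd' M : ℝ → Fin 3 → ℝ)
    (hR : ∀ t, HasDerivAt R (R t * hat (Ω t)) t)
    (hRd : ∀ t, HasDerivAt Rd (Rd t * hat (Ωd t)) t)
    (hΩ : ∀ t, HasDerivAt Ω (Ω' t) t)
    (hΩd : ∀ t, HasDerivAt Ωd (Ωd' t) t)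
    (hdyn : ∀ t, J *ᵥ Ω' t + crossProduct (Ω t) (J *ᵥ Ω t) = M t)
    (hM : ∀ t, M t =
      -(kR • eR 1 (R t) (Rd t)) - kΩ • (Ω t - ((R t)ᵀ * Rd t) *ᵥ Ωd t)
        + hat (((R t)ᵀ * Rd t) *ᵥ Ωd t) *ᵥ (J *ᵥ (((R t)ᵀ * Rd t) *ᵥ Ωd t))
        + J *ᵥ (((R t)ᵀ * Rd t) *ᵥ Ωd' t))
    (t : ℝ) :
    HasDerivAt (fun s => J *ᵥ (Ω s - ((R s)ᵀ * Rd s) *ᵥ Ωd s))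
      (hat (J *ᵥ (Ω t - ((R t)ᵀ * Rd t) *ᵥ Ωd t)
            + ((2 : ℝ) • J - J.trace • (1 : Matrix (Fin 3) (Fin 3) ℝ))
                *ᵥ (((R t)ᵀ * Rd t) *ᵥ Ωd t))
          *ᵥ (Ω t - ((R t)ᵀ * Rd t) *ᵥ Ωd t)
        - kR • eR 1 (R t) (Rd t) - kΩ • (Ω t - ((R t)ᵀ * Rd t) *ᵥ Ωd t)) t := by
  have hJsymm : J.IsSymm := Matrix.isHermitian_iff_isSymm.mp hJ.isHermitian
  have hv := hasDerivAt_transpose_mul_mulVec (hR t) (hRd t) (hΩd t)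
  refine ((hasDerivAt_const t J).matrix_mulVec ((hΩ t).sub hv)).congr_deriv ?_
  rw [hJsymm.hat_mulVec_sub_eq, Matrix.zero_mulVec, zero_add, Matrix.mulVec_sub,
    Matrix.mulVec_add, Matrix.mulVec_neg, eq_sub_of_add_eq (hdyn t), hM t, hat_mulVec]
  abel

/-- attitude error dynamics
`J ė_Ω = (J e_Ω + d)^∧ e_Ω − k_R e_R − k_Ω e_Ω` with `d = (2J − tr(J)I) RᵀR_d Ω_d`. -/
theorem attitude_error_dynamics
    (J : Matrix (Fin 3) (Fin 3) ℝ) (hJ : J.PosDef)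
    (kR kΩ : ℝ) (hkR : 0 < kR) (hkΩ : 0 < kΩ)
    (R Rd : ℝ → Matrix (Fin 3) (Fin 3) ℝ) (Ω Ω' Ωd Ωd' M : ℝ → Fin 3 → ℝ)
    (hSO : ∀ t, SO3 (R t)) (hSOd : ∀ t, SO3 (Rd t))
    (hR : ∀ t, HasDerivAt R (R t * hat (Ω t)) t)
    (hRd : ∀ t, HasDerivAt Rd (Rd t * hat (Ωd t)) t)
    (hΩ : ∀ t, HasDerivAt Ω (Ω' t) t)
    (hΩd : ∀ t, HasDerivAt Ωd (Ωd' t) t)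
    (hdyn : ∀ t, J *ᵥ Ω' t + crossProduct (Ω t) (J *ᵥ Ω t) = M t)
    (hM : ∀ t, M t =
      -(kR • eR 1 (R t) (Rd t)) - kΩ • (Ω t - ((R t)ᵀ * Rd t) *ᵥ Ωd t)
        + hat (((R t)ᵀ * Rd t) *ᵥ Ωd t) *ᵥ (J *ᵥ (((R t)ᵀ * Rd t) *ᵥ Ωd t))
        + J *ᵥ (((R t)ᵀ * Rd t) *ᵥ Ωd' t))
    (t : ℝ) :
    HasDerivAt (fun s => J *ᵥ (Ω s - ((R s)ᵀ * Rd s) *ᵥ Ωd s))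
      (hat (J *ᵥ (Ω t - ((R t)ᵀ * Rd t) *ᵥ Ωd t)
            + ((2 : ℝ) • J - J.trace • (1 : Matrix (Fin 3) (Fin 3) ℝ))
                *ᵥ (((R t)ᵀ * Rd t) *ᵥ Ωd t))
          *ᵥ (Ω t - ((R t)ᵀ * Rd t) *ᵥ Ωd t)
        - kR • eR 1 (R t) (Rd t) - kΩ • (Ω t - ((R t)ᵀ * Rd t) *ᵥ Ωd t)) t :=
  attitude_error_dynamics_general J hJ kR kΩ R Rd Ω Ω' Ωd Ωd' M hR hRd hΩ hΩd hdyn hM t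
end
end
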